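/- A functional L = Σ_{|α| ≤ d} c_α Δ_α belongs to D_0[I], where I = (f_1,…,f_N), if and only if L(g·f_i) = 0 for all i = 1,…,N and all polynomials g of degree at most d − 1 (DZ-closedness). -/
import Mathlib


open MvPolynomial

/-- The constant-coefficient differential operator `∂^β = ∂₁^{β₁} ⋯ ∂ₙ^{βₙ}`
acting on `ℂ[x₁,…,xₙ]`. -/
noncomputable def diffOp {n : ℕ} (β : Fin n →₀ ℕ) : Module.End ℂ (MvPolynomial (Fin n) ℂ) :=
  (List.ofFn fun i : Fin n => ((pderiv (R := ℂ) i).toLinearMap) ^ (β i)).prod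

/-- The differential functional
`Δ_α(f) = (1/(α₁!⋯αₙ!)) ⋅ (∂^{|α|} f / ∂x^α) |_{x = p}`. -/
noncomputable def DeltaAt {n : ℕ} (p : Fin n → ℂ) (α : Fin n →₀ ℕ)
    (f : MvPolynomial (Fin n) ℂ) : ℂ :=
  (∏ i : Fin n, ((α i).factorial : ℂ))⁻¹ * eval p (diffOp α f)

/-- A functional `L = Σ c_α Δ_α` (given by its finitely supported coefficient
vector `c`) applied to a polynomial `f`. -/
noncomputable def applyF {n : ℕ} (p : Fin n → ℂ) (c : (Fin n →₀ ℕ) →₀ ℂ)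
    (f : MvPolynomial (Fin n) ℂ) : ℂ :=
  c.sum fun α a => a * DeltaAt p α f

/-- The local dual space `D_p[I]` of differential functionals (identified with
their coefficient vectors) annihilating the ideal `I` at the point `p`. -/
noncomputable def dualSpace {n : ℕ} (p : Fin n → ℂ) (I : Ideal (MvPolynomial (Fin n) ℂ)) :
    Submodule ℂ ((Fin n →₀ ℕ) →₀ ℂ) :=
  ⨅ f ∈ I, LinearMap.ker (Finsupp.linearCombination ℂ (fun α => DeltaAt p α f))

/-- The total degree `|α|` of a multi-index. -/
def degOf {n : ℕ} (α : Fin n →₀ ℕ) : ℕ := α.sum fun _ k => k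

lemma pderiv_pow_monomial {n : ℕ} (i : Fin n) (k : ℕ) (γ : Fin n →₀ ℕ) (b : ℂ) :
    (((pderiv (R := ℂ) i).toLinearMap) ^ k) (monomial γ b)
      = monomial (γ - Finsupp.single i k) (b * ((γ i).descFactorial k : ℂ)) := by
  induction k generalizing γ b with
  | zero => simp
  | succ k ih =>
    rw [pow_succ, Module.End.mul_apply]
    have h1 : ((pderiv (R := ℂ) i).toLinearMap) (monomial γ b)
        = monomial (γ - Finsupp.single i 1) (b * (γ i : ℂ)) := by
      simp [pderiv_monomial]
    rw [h1, ih]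
    have h2 : γ - Finsupp.single i 1 - Finsupp.single i k = γ - Finsupp.single i (k + 1) := by
      rw [tsub_tsub, ← Finsupp.single_add, add_comm]
    have h3 : ((γ - Finsupp.single i 1 : Fin n →₀ ℕ)) i = γ i - 1 := by
      simp [Finsupp.tsub_apply]
    rw [h2, h3]
    congr 1
    rw [mul_assoc]
    congr 1
    cases hγ : γ i with
    | zero => simp
    | succ m =>
      rw [Nat.succ_sub_one, Nat.succ_descFactorial_succ]
      push_cast
      ring

lemma sum_single_apply_notmem {n : ℕ} (s : Finset (Fin n)) (k : Fin n → ℕ) (i : Fin n)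
    (hi : i ∉ s) : ((∑ j ∈ s, Finsupp.single j (k j) : Fin n →₀ ℕ)) i = 0 := by
  rw [Finset.sum_apply']
  refine Finset.sum_eq_zero fun j hj => ?_
  rw [Finsupp.single_apply, if_neg]
  rintro rfl; exact hi hj

lemma prod_pderiv_monomial {n : ℕ} (l : List (Fin n)) (hl : l.Nodup) (k : Fin n → ℕ)
    (γ : Fin n →₀ ℕ) (b : ℂ) :
    (l.map fun i => ((pderiv (R := ℂ) i).toLinearMap) ^ (k i)).prod (monomial γ b)
      = monomial (γ - ∑ i ∈ l.toFinset, Finsupp.single i (k i))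
          (b * ∏ i ∈ l.toFinset, ((γ i).descFactorial (k i) : ℂ)) := by
  induction l generalizing b with
  | nil => simp
  | cons i l ih =>
    have hnd := List.nodup_cons.mp hl
    have hi : i ∉ l.toFinset := by simpa using hnd.1
    rw [List.map_cons, List.prod_cons, Module.End.mul_apply, ih hnd.2, pderiv_pow_monomial,
      List.toFinset_cons, Finset.sum_insert hi, Finset.prod_insert hi]
    have hS : ((γ - ∑ j ∈ l.toFinset, Finsupp.single j (k j) : Fin n →₀ ℕ)) i = γ i := by
      rw [Finsupp.tsub_apply, sum_single_apply_notmem _ _ _ hi, Nat.sub_zero]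
    rw [hS, tsub_tsub, add_comm]
    congr 1
    ring

lemma univ_sum_single_eq {n : ℕ} (β : Fin n →₀ ℕ) :
    (∑ i : Fin n, Finsupp.single i (β i)) = β := by
  ext j
  rw [Finset.sum_apply']
  simp [Finsupp.single_apply]

lemma diffOp_monomial {n : ℕ} (β γ : Fin n →₀ ℕ) (b : ℂ) :
    diffOp β (monomial γ b)
      = monomial (γ - β) (b * ∏ i : Fin n, ((γ i).descFactorial (β i) : ℂ)) := by
  rw [diffOp, List.ofFn_eq_map, prod_pderiv_monomial _ (List.nodup_finRange n)]
  rw [List.toFinset_finRange, univ_sum_single_eq]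

lemma eval0_diffOp {n : ℕ} (β : Fin n →₀ ℕ) (h : MvPolynomial (Fin n) ℂ) :
    eval (0 : Fin n → ℂ) (diffOp β h) = (∏ i : Fin n, ((β i).factorial : ℂ)) * coeff β h := by
  conv_lhs => rw [h.as_sum, map_sum, map_sum]
  have key : ∀ γ ∈ h.support,
      eval (0 : Fin n → ℂ) (diffOp β (monomial γ (coeff γ h)))
        = if γ = β then (∏ i : Fin n, ((β i).factorial : ℂ)) * coeff β h else 0 := by
    intro γ _
    rw [diffOp_monomial, eval_zero, constantCoeff_monomial]
    by_cases hγβ : γ = β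
    · subst hγβ
      rw [if_pos (tsub_self γ), if_pos rfl]
      simp [Nat.descFactorial_self, mul_comm]
    · rw [if_neg hγβ]
      by_cases hle : γ - β = 0
      · rw [if_pos hle]
        have hle' : γ ≤ β := tsub_eq_zero_iff_le.mp hle
        obtain ⟨i, hi⟩ : ∃ i, γ i < β i := by
          by_contra hc
          push_neg at hc
          exact hγβ (le_antisymm hle' fun i => hc i)
        have : ((γ i).descFactorial (β i) : ℂ) = 0 := by
          rw [Nat.descFactorial_eq_zero_iff_lt.mpr hi, Nat.cast_zero]
        rw [Finset.prod_eq_zero (Finset.mem_univ i) this, mul_zero]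
      · rw [if_neg hle]
  rw [Finset.sum_congr rfl key, Finset.sum_ite_eq' h.support β]
  by_cases hβ : β ∈ h.support
  · rw [if_pos hβ]
  · rw [if_neg hβ, notMem_support_iff.mp hβ, mul_zero]

lemma DeltaAt_zero_eq_coeff {n : ℕ} (β : Fin n →₀ ℕ) (h : MvPolynomial (Fin n) ℂ) :
    DeltaAt (0 : Fin n → ℂ) β h = coeff β h := by
  have hne : (∏ i : Fin n, ((β i).factorial : ℂ)) ≠ 0 :=
    Finset.prod_ne_zero_iff.mpr fun i _ => Nat.cast_ne_zero.mpr (Nat.factorial_ne_zero _)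
  rw [DeltaAt, eval0_diffOp, ← mul_assoc, inv_mul_cancel₀ hne, one_mul]

lemma applyF_zero_eq {n : ℕ} (c : (Fin n →₀ ℕ) →₀ ℂ) (h : MvPolynomial (Fin n) ℂ) :
    applyF (0 : Fin n → ℂ) c h = ∑ α ∈ c.support, c α * coeff α h := by
  rw [applyF, Finsupp.sum]
  exact Finset.sum_congr rfl fun α _ => by rw [DeltaAt_zero_eq_coeff]

lemma degOf_eq {n : ℕ} (γ : Fin n →₀ ℕ) : degOf γ = ∑ i : Fin n, γ i :=
  Finsupp.sum_fintype _ _ fun _ => rfl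

lemma eq_of_le_of_degOf_le {n : ℕ} {γ α : Fin n →₀ ℕ} (hle : γ ≤ α)
    (hd : degOf α ≤ degOf γ) : γ = α := by
  ext i
  by_contra hne
  have hlt : γ i < α i := lt_of_le_of_ne (hle i) hne
  have : degOf γ < degOf α := by
    rw [degOf_eq, degOf_eq]
    exact Finset.sum_lt_sum (fun j _ => hle j) ⟨i, Finset.mem_univ i, hlt⟩
  omega

lemma high_term_zero {n d : ℕ} (c : (Fin n →₀ ℕ) →₀ ℂ)
    (hord : ∀ α ∈ c.support, degOf α ≤ d) (h : MvPolynomial (Fin n) ℂ)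
    (h0 : coeff 0 h = 0) (γ : Fin n →₀ ℕ) (hγ : d ≤ degOf γ) (b : ℂ) :
    ∑ α ∈ c.support, c α * coeff α (monomial γ b * h) = 0 := by
  refine Finset.sum_eq_zero fun α hα => ?_
  rw [coeff_monomial_mul']
  by_cases hle : γ ≤ α
  · rw [if_pos hle]
    have hαγ : γ = α := eq_of_le_of_degOf_le hle (le_trans (hord α hα) hγ)
    rw [← hαγ, tsub_self, h0, mul_zero, mul_zero]
  · rw [if_neg hle, mul_zero]

lemma L_mul_eq_zero {n d : ℕ} (c : (Fin n →₀ ℕ) →₀ ℂ)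
    (hord : ∀ α ∈ c.support, degOf α ≤ d) (h : MvPolynomial (Fin n) ℂ)
    (h0 : coeff 0 h = 0)
    (H : ∀ g : MvPolynomial (Fin n) ℂ, g.totalDegree ≤ d - 1 →
      ∑ α ∈ c.support, c α * coeff α (g * h) = 0)
    (g : MvPolynomial (Fin n) ℂ) :
    ∑ α ∈ c.support, c α * coeff α (g * h) = 0 := by
  classical
  set L : MvPolynomial (Fin n) ℂ →ₗ[ℂ] ℂ := ∑ α ∈ c.support, c α • lcoeff ℂ α with hLdef
  have hL : ∀ x, L x = ∑ α ∈ c.support, c α * coeff α x := fun x => by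
    simp [hLdef, LinearMap.sum_apply, lcoeff_apply, smul_eq_mul]
  rw [← hL]
  set gl := ∑ γ ∈ g.support.filter (fun γ => degOf γ < d), monomial γ (coeff γ g) with hgl
  set gh := ∑ γ ∈ g.support.filter (fun γ => ¬ degOf γ < d), monomial γ (coeff γ g) with hgh
  have hg : g = gl + gh := by
    rw [hgl, hgh, Finset.sum_filter_add_sum_filter_not]
    exact g.as_sum
  rw [hg, add_mul, map_add]
  have h1 : L (gl * h) = 0 := by
    rw [hL]
    refine H gl (totalDegree_finsetSum_le fun γ hγ => ?_)
    refine le_trans (totalDegree_monomial_le _ _) ?_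
    have : degOf γ < d := (Finset.mem_filter.mp hγ).2
    exact Nat.le_sub_one_of_lt this
  have h2 : L (gh * h) = 0 := by
    rw [hgh, Finset.sum_mul, map_sum]
    refine Finset.sum_eq_zero fun γ hγ => ?_
    rw [hL]
    exact high_term_zero c hord h h0 γ (not_lt.mp (Finset.mem_filter.mp hγ).2) _
  rw [h1, h2, add_zero]

/-- DZ-closedness: a functional `L = Σ_{|α| ≤ d} c_α Δ_α` belongs
to `D_0[I]`, `I = (f₁,…,f_N)`, if and only if `L(g·f_i) = 0` for all `i` and
all polynomials `g` of degree at most `d − 1`. -/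
theorem DZ_closedness {n N d : ℕ} (f : Fin N → MvPolynomial (Fin n) ℂ)
    (hf0 : ∀ i, eval (0 : Fin n → ℂ) (f i) = 0)
    (c : (Fin n →₀ ℕ) →₀ ℂ)
    (hord : ∀ α ∈ c.support, degOf α ≤ d) :
    c ∈ dualSpace (0 : Fin n → ℂ) (Ideal.span (Set.range f)) ↔
      ∀ i, ∀ g : MvPolynomial (Fin n) ℂ, g.totalDegree ≤ d - 1 →
        applyF (0 : Fin n → ℂ) c (g * f i) = 0 := by
  classical
  have hmem : c ∈ dualSpace (0 : Fin n → ℂ) (Ideal.span (Set.range f)) ↔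
      ∀ h ∈ Ideal.span (Set.range f), applyF (0 : Fin n → ℂ) c h = 0 := by
    simp only [dualSpace, Submodule.mem_iInf, LinearMap.mem_ker]
    refine forall_congr' fun h => forall_congr' fun _ => ?_
    rw [Finsupp.linearCombination_apply, applyF]
    rfl
  constructor
  · intro hc i g hg
    exact hmem.mp hc _ (Ideal.mul_mem_left _ g (Ideal.subset_span ⟨i, rfl⟩))
  · intro H
    rw [hmem]
    have key : ∀ h ∈ Ideal.span (Set.range f), ∀ g : MvPolynomial (Fin n) ℂ,
        applyF (0 : Fin n → ℂ) c (g * h) = 0 := by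
      intro h hh
      refine Submodule.span_induction (p := fun x _ => ∀ g : MvPolynomial (Fin n) ℂ,
          applyF (0 : Fin n → ℂ) c (g * x) = 0) ?_ ?_ ?_ ?_ hh
      · rintro x ⟨i, rfl⟩ g
        rw [applyF_zero_eq]
        refine L_mul_eq_zero (d := d) c hord (f i) ?_ (fun g' hg' => ?_) g
        · have := hf0 i
          rwa [eval_zero, constantCoeff_eq] at this
        · rw [← applyF_zero_eq]
          exact H i g' hg'
      · intro g
        rw [mul_zero, applyF_zero_eq]
        simp
      · intro x y _ _ hx hy g
        rw [mul_add, applyF_zero_eq]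
        simp only [coeff_add, mul_add, Finset.sum_add_distrib]
        rw [← applyF_zero_eq, ← applyF_zero_eq, hx g, hy g, add_zero]
      · intro r x _ hx g
        rw [smul_eq_mul, ← mul_assoc]
        exact hx (g * r)
    intro h hh
    have := key h hh 1
    rwa [one_mul] at this
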